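/- arXiv:1910.13639 — 6 statements merged into one kernel-verified Lean document; each statement's English description precedes it below -/
import Mathlib

section
/- Let γ0, γ1 ∈ ℝ and let (s1, s2) be given by the connection formula. Then: (i) if γ1 = 1 then s2 = −2·s1 + 2; (ii) if γ0 = −1 then s2 = 2·s1 + 2; (iii) if γ1 = γ0 − 2 then s2 = −(1/4)·s1² − 2. Hence the three edges γ1 = 1, γ0 = −1 and γ1 = γ0 − 2 of the asymptotic-data triangle are mapped respectively onto the lines s2 = −2 s1 + 2, s2 = 2 s1 + 2 and the parabola s2 = −s1²/4 − 2. -/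
open Real

/-- The connection formula maps the three edges `γ1 = 1`, `γ0 = −1`, `γ1 = γ0 − 2` of the
asymptotic-data triangle into the lines `s2 = −2 s1 + 2`, `s2 = 2 s1 + 2` and the parabola
`s2 = −s1²/4 − 2`, respectively. -/
theorem connection_formula_edges (γ0 γ1 s1 s2 : ℝ)
    (hs1 : s1 = -2 * Real.cos (π * (γ0 + 1) / 4) - 2 * Real.cos (π * (γ1 + 3) / 4))
    (hs2 : s2 = -2 - 4 * Real.cos (π * (γ0 + 1) / 4) * Real.cos (π * (γ1 + 3) / 4)) :
    (γ1 = 1 → s2 = -2 * s1 + 2) ∧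
    (γ0 = -1 → s2 = 2 * s1 + 2) ∧
    (γ1 = γ0 - 2 → s2 = -(1/4) * s1^2 - 2) := by
  refine ⟨fun h => ?_, fun h => ?_, fun h => ?_⟩
  · subst h
    have : π * (1 + 3) / 4 = π := by ring
    rw [this, Real.cos_pi] at hs1 hs2
    rw [hs1, hs2]; ring
  · subst h
    have : π * (-1 + 1) / 4 = 0 := by ring
    rw [this, Real.cos_zero] at hs1 hs2
    rw [hs1, hs2]; ring
  · subst h
    have : π * (γ0 - 2 + 3) / 4 = π * (γ0 + 1) / 4 := by ring
    rw [this] at hs1 hs2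
    rw [hs1, hs2]; ring
end

section
/- Let γ0, γ1 ∈ ℝ satisfy −1 < γ0, γ1 < 1 and γ1 > γ0 − 2 (the open asymptotic-data triangle), and let (s1, s2) be given by the connection formula. Then 8 + s1² + 4·s2 > 0, s2 < −2·s1 + 2, and s2 < 2·s1 + 2; i.e. (s1, s2) lies in the open region bounded by the two lines s2 = ±2 s1 + 2 and the parabola s2 = −s1²/4 − 2. Moreover 8 + s1² + 4·s2 = 4(cos(π(γ0+1)/4) − cos(π(γ1+3)/4))². -/
open Real

/-- The connection formula maps the open asymptotic-data triangle
`−1 < γ0`, `γ1 < 1`, `γ1 > γ0 − 2` into the open region of the `(s1, s2)`-plane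
bounded by the lines `s2 = ±2 s1 + 2` and the parabola `s2 = −s1²/4 − 2`; moreover
`8 + s1² + 4 s2 = 4 (cos(π(γ0+1)/4) − cos(π(γ1+3)/4))²`. -/
theorem connection_formula_open_triangle (γ0 γ1 s1 s2 : ℝ)
    (hγ0 : -1 < γ0) (hγ1 : γ1 < 1) (hγ : γ1 > γ0 - 2)
    (hs1 : s1 = -2 * Real.cos (π * (γ0 + 1) / 4) - 2 * Real.cos (π * (γ1 + 3) / 4))
    (hs2 : s2 = -2 - 4 * Real.cos (π * (γ0 + 1) / 4) * Real.cos (π * (γ1 + 3) / 4)) :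
    0 < 8 + s1^2 + 4 * s2 ∧
    s2 < -2 * s1 + 2 ∧
    s2 < 2 * s1 + 2 ∧
    8 + s1^2 + 4 * s2
      = 4 * (Real.cos (π * (γ0 + 1) / 4) - Real.cos (π * (γ1 + 3) / 4))^2 := by
  have hπ : (0:ℝ) < π := Real.pi_pos
  set u : ℝ := π * (γ0 + 1) / 4 with hu
  set v : ℝ := π * (γ1 + 3) / 4 with hv
  have hu0 : 0 < u := by
    have : 0 < γ0 + 1 := by linarith
    positivity
  have hvπ : v < π := by
    rw [hv]; nlinarith
  have huv : u < v := by
    rw [hu, hv]; nlinarith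
  have h1 : Real.cos v < Real.cos u :=
    Real.cos_lt_cos_of_nonneg_of_le_pi hu0.le hvπ.le huv
  have h2 : Real.cos u < 1 := by
    calc Real.cos u < Real.cos 0 :=
      Real.cos_lt_cos_of_nonneg_of_le_pi le_rfl (by linarith) hu0
    _ = 1 := Real.cos_zero
  have h3 : -1 < Real.cos v := by
    calc Real.cos v > Real.cos π :=
      Real.cos_lt_cos_of_nonneg_of_le_pi (by linarith) le_rfl hvπ
    _ = _ := by rw [Real.cos_pi]
  refine ⟨?_, ?_, ?_, ?_⟩ <;> subst hs1 hs2 <;> nlinarith [sq_nonneg (Real.cos u - Real.cos v)]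
end

section
/- Let γ0, γ1 ∈ ℝ satisfy −1 ≤ γ0 ≤ 3, γ1 ≤ 1 and γ1 ≥ γ0 − 2 (the closed asymptotic-data triangle), and let (s1, s2) be given by the connection formula. Then 8 + s1² + 4·s2 ≥ 0, the two real numbers −s1/4 ± (1/4)·√(8 + s1² + 4 s2) lie in [−1, 1], and the inverse connection formula holds: γ0 = (4/π)·arccos(−s1/4 + (1/4)·√(8 + s1² + 4 s2)) − 1 and γ1 = (4/π)·arccos(−s1/4 − (1/4)·√(8 + s1² + 4 s2)) − 3. -/
open Real

/-- On the closed asymptotic-data triangle `−1 ≤ γ0 ≤ 3`, `γ1 ≤ 1`, `γ1 ≥ γ0 − 2`,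
the connection formula is inverted by
`γ0 = (4/π)·arccos(−s1/4 + √(8 + s1² + 4 s2)/4) − 1` and
`γ1 = (4/π)·arccos(−s1/4 − √(8 + s1² + 4 s2)/4) − 3`. -/
theorem connection_formula_inverse (γ0 γ1 s1 s2 : ℝ)
    (hγ0l : -1 ≤ γ0) (hγ0r : γ0 ≤ 3) (hγ1 : γ1 ≤ 1) (hγ : γ1 ≥ γ0 - 2)
    (hs1 : s1 = -2 * Real.cos (π * (γ0 + 1) / 4) - 2 * Real.cos (π * (γ1 + 3) / 4))
    (hs2 : s2 = -2 - 4 * Real.cos (π * (γ0 + 1) / 4) * Real.cos (π * (γ1 + 3) / 4)) :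
    0 ≤ 8 + s1^2 + 4 * s2 ∧
    (-s1/4 + Real.sqrt (8 + s1^2 + 4 * s2) / 4) ∈ Set.Icc (-1 : ℝ) 1 ∧
    (-s1/4 - Real.sqrt (8 + s1^2 + 4 * s2) / 4) ∈ Set.Icc (-1 : ℝ) 1 ∧
    γ0 = (4/π) * Real.arccos (-s1/4 + Real.sqrt (8 + s1^2 + 4 * s2) / 4) - 1 ∧
    γ1 = (4/π) * Real.arccos (-s1/4 - Real.sqrt (8 + s1^2 + 4 * s2) / 4) - 3 := by
  have hπ := Real.pi_pos
  set x := π * (γ0 + 1) / 4 with hx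
  set y := π * (γ1 + 3) / 4 with hy
  have hx0 : 0 ≤ x := by
    have : 0 ≤ γ0 + 1 := by linarith
    rw [hx]; positivity
  have hxy : x ≤ y := by
    rw [hx, hy]
    have : γ0 + 1 ≤ γ1 + 3 := by linarith
    nlinarith
  have hyπ : y ≤ π := by
    rw [hy]; nlinarith
  have hab : Real.cos y ≤ Real.cos x :=
    Real.cos_le_cos_of_nonneg_of_le_pi hx0 hyπ hxy
  set a := Real.cos x
  set b := Real.cos y
  have hkey : 8 + s1^2 + 4 * s2 = (2 * (a - b))^2 := by
    rw [hs1, hs2]; ring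
  have hsq : Real.sqrt (8 + s1^2 + 4 * s2) = 2 * (a - b) := by
    rw [hkey, Real.sqrt_sq (by linarith)]
  have hA : -s1/4 + Real.sqrt (8 + s1^2 + 4 * s2) / 4 = a := by
    rw [hsq, hs1]; ring
  have hB : -s1/4 - Real.sqrt (8 + s1^2 + 4 * s2) / 4 = b := by
    rw [hsq, hs1]; ring
  refine ⟨by rw [hkey]; positivity, ?_, ?_, ?_, ?_⟩
  · rw [hA]; exact ⟨Real.neg_one_le_cos x, Real.cos_le_one x⟩
  · rw [hB]; exact ⟨Real.neg_one_le_cos y, Real.cos_le_one y⟩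
  · rw [hA, Real.arccos_cos hx0 (le_trans hxy hyπ), hx]
    field_simp; ring
  · rw [hB, Real.arccos_cos (le_trans hx0 hxy) hyπ, hy]
    field_simp; ring
end

section
/- Let k ≠ 0, c, A, B be real constants and let I ⊆ ℝ be an open interval on which cosh(k(s + c)) > 1. Define u, v : I → ℝ by u(s) + v(s) = A + B·s and v(s) − u(s) = ln( k² / (8·(cosh(k(s + c)) − 1)) ). Then (u, v) satisfies the truncated system (1/4)·u''(s) = −e^{v(s) − u(s)} and (1/4)·v''(s) = e^{v(s) − u(s)} for all s ∈ I. -/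
/-! Since `u + v` is affine, `u'' = -w''/2` and `v'' = w''/2` for `w = v - u`, so the system reduces
to Liouville's equation `w'' = 8 e^w`. With `t = k (s + c)`, one has
`(log (cosh t - 1))' = sinh t / (cosh t - 1)` and, by `cosh² - sinh² = 1`,
`(sinh t / (cosh t - 1))' = -1 / (cosh t - 1)`; hence `w = log (k² / 8) - log (cosh t - 1)` has
`w'' = k² / (cosh t - 1) = 8 e^w`. -/

open Filter Topology

namespace Real

theorem hasDerivAt_log_cosh_sub_one {t : ℝ} (ht : cosh t ≠ 1) :
    HasDerivAt (fun t => log (cosh t - 1)) (sinh t / (cosh t - 1)) t :=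
  ((hasDerivAt_cosh t).sub_const 1).log (sub_ne_zero.mpr ht)

theorem hasDerivAt_sinh_div_cosh_sub_one {t : ℝ} (ht : cosh t ≠ 1) :
    HasDerivAt (fun t => sinh t / (cosh t - 1)) (-(cosh t - 1)⁻¹) t := by
  have hne : cosh t - 1 ≠ 0 := sub_ne_zero.mpr ht
  refine ((hasDerivAt_sinh t).div ((hasDerivAt_cosh t).sub_const 1) hne).congr_deriv ?_
  field_simp
  linear_combination cosh_sq_sub_sinh_sq t

theorem deriv_deriv_log_cosh_sub_one {t : ℝ} (ht : cosh t ≠ 1) :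
    deriv (deriv fun t => log (cosh t - 1)) t = -(cosh t - 1)⁻¹ := by
  have hderiv : deriv (fun t => log (cosh t - 1)) =ᶠ[𝓝 t] fun t => sinh t / (cosh t - 1) := by
    filter_upwards [continuous_cosh.continuousAt.eventually_ne ht] with x hx
    exact (hasDerivAt_log_cosh_sub_one hx).deriv
  rw [hderiv.deriv_eq, (hasDerivAt_sinh_div_cosh_sub_one ht).deriv]

end Real

theorem deriv_deriv_comp_mul_add (f : ℝ → ℝ) (k c x : ℝ) :
    deriv (deriv fun s => f (k * (s + c))) x = k ^ 2 * deriv (deriv f) (k * (x + c)) := by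
  have hchain : ∀ g : ℝ → ℝ,
      deriv (fun s => g (k * (s + c))) = fun s => k * deriv g (k * (s + c)) := by
    intro g
    funext s
    rw [deriv_comp_add_const (fun y => g (k * y)), deriv_comp_mul_left, smul_eq_mul]
  rw [hchain, deriv_const_mul_field', hchain, pow_two, mul_assoc]

theorem deriv_deriv_affine_add_mul {w : ℝ → ℝ} {s : ℝ} (A B ε : ℝ)
    (hw : ∀ᶠ y in 𝓝 s, DifferentiableAt ℝ w y) :
    deriv (deriv fun y => A + B * y + ε * w y) s = ε * deriv (deriv w) s := by
  have hderiv : deriv (fun y => A + B * y + ε * w y) =ᶠ[𝓝 s] fun y => B + ε * deriv w y := by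
    filter_upwards [hw] with y hy
    exact ((((hasDerivAt_id y).const_mul B).const_add A).add
      (hy.hasDerivAt.const_mul ε)).deriv.trans (by simp)
  rw [hderiv.deriv_eq, deriv_const_add, deriv_const_mul_field']

section LiouvilleCoshProfile

open Real

noncomputable def liouvilleCoshProfile (k c μ s : ℝ) : ℝ :=
  log (k ^ 2 / (μ * (cosh (k * (s + c)) - 1)))

variable {k c μ s : ℝ}

theorem liouvilleCoshProfile_eventuallyEq (hμ : μ ≠ 0) (hs : cosh (k * (s + c)) ≠ 1) :
    liouvilleCoshProfile k c μ =ᶠ[𝓝 s]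
      fun y => log (k ^ 2 / μ) - log (cosh (k * (y + c)) - 1) := by
  have hk : k ≠ 0 := by rintro rfl; simp at hs
  have hcont : Continuous fun y => cosh (k * (y + c)) := by fun_prop
  filter_upwards [hcont.continuousAt.eventually_ne hs] with y hy
  rw [liouvilleCoshProfile, ← div_div,
    log_div (div_ne_zero (pow_ne_zero 2 hk) hμ) (sub_ne_zero.mpr hy)]

theorem differentiableAt_liouvilleCoshProfile (hμ : μ ≠ 0) (hs : cosh (k * (s + c)) ≠ 1) :
    DifferentiableAt ℝ (liouvilleCoshProfile k c μ) s := by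
  have haffine : DifferentiableAt ℝ (fun y => k * (y + c)) s := by fun_prop
  refine DifferentiableAt.congr_of_eventuallyEq ?_ (liouvilleCoshProfile_eventuallyEq hμ hs)
  exact ((hasDerivAt_log_cosh_sub_one hs).differentiableAt.comp s haffine).const_sub _

theorem deriv_deriv_liouvilleCoshProfile (hμ : 0 < μ) (hs : cosh (k * (s + c)) ≠ 1) :
    deriv (deriv (liouvilleCoshProfile k c μ)) s = μ * exp (liouvilleCoshProfile k c μ s) := by
  have hcosh : 0 < cosh (k * (s + c)) - 1 := sub_pos.mpr ((one_le_cosh _).lt_of_ne' hs)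
  have hk : k ≠ 0 := by rintro rfl; simp at hs
  rw [(liouvilleCoshProfile_eventuallyEq hμ.ne' hs).deriv.deriv_eq,
    show deriv (fun y => log (k ^ 2 / μ) - log (cosh (k * (y + c)) - 1)) =
      -deriv (fun y => log (cosh (k * (y + c)) - 1)) from funext fun _ => deriv_const_sub _,
    deriv.neg, deriv_deriv_comp_mul_add (fun t => log (cosh t - 1)),
    deriv_deriv_log_cosh_sub_one hs, liouvilleCoshProfile, exp_log (by positivity)]
  field_simp

end LiouvilleCoshProfile

theorem E3_truncation_cosh_solution_general (k c A B : ℝ) (a b : ℝ)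
    (hpos : ∀ s ∈ Set.Ioo a b, 1 < Real.cosh (k * (s + c)))
    (u v : ℝ → ℝ)
    (hu : u = fun s =>
      ((A + B * s) - Real.log (k^2 / (8 * (Real.cosh (k * (s + c)) - 1)))) / 2)
    (hv : v = fun s =>
      ((A + B * s) + Real.log (k^2 / (8 * (Real.cosh (k * (s + c)) - 1)))) / 2) :
    ∀ s ∈ Set.Ioo a b,
      (1/4) * deriv (deriv u) s = -Real.exp (v s - u s) ∧
      (1/4) * deriv (deriv v) s = Real.exp (v s - u s) := by
  intro s hs
  set w := liouvilleCoshProfile k c 8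
  have hu' : u = fun y => A / 2 + B / 2 * y + (-1 / 2) * w y := by
    rw [hu]; funext y; simp only [w, liouvilleCoshProfile]; ring
  have hv' : v = fun y => A / 2 + B / 2 * y + 1 / 2 * w y := by
    rw [hv]; funext y; simp only [w, liouvilleCoshProfile]; ring
  have hdiff : ∀ᶠ y in 𝓝 s, DifferentiableAt ℝ w y := by
    filter_upwards [isOpen_Ioo.mem_nhds hs] with y hy
    exact differentiableAt_liouvilleCoshProfile (by norm_num) (hpos y hy).ne'
  have hvu : v s - u s = w s := by rw [hu', hv']; ring
  rw [hvu, hu', hv', deriv_deriv_affine_add_mul _ _ _ hdiff, deriv_deriv_affine_add_mul _ _ _ hdiff,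
    deriv_deriv_liouvilleCoshProfile (by norm_num) (hpos s hs).ne']
  constructor <;> ring

/-- The pair `(u, v)` determined by `u + v = A + B·s` and
`v − u = ln(k²/(8(cosh(k(s+c)) − 1)))` solves the E3 truncated system
`(1/4)·u'' = −e^{v−u}`, `(1/4)·v'' = e^{v−u}` on any open interval where
`cosh(k(s+c)) > 1`. -/
theorem E3_truncation_cosh_solution (k c A B : ℝ) (hk : k ≠ 0) (a b : ℝ)
    (hpos : ∀ s ∈ Set.Ioo a b, 1 < Real.cosh (k * (s + c)))
    (u v : ℝ → ℝ)
    (hu : u = fun s =>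
      ((A + B * s) - Real.log (k^2 / (8 * (Real.cosh (k * (s + c)) - 1)))) / 2)
    (hv : v = fun s =>
      ((A + B * s) + Real.log (k^2 / (8 * (Real.cosh (k * (s + c)) - 1)))) / 2) :
    ∀ s ∈ Set.Ioo a b,
      (1/4) * deriv (deriv u) s = -Real.exp (v s - u s) ∧
      (1/4) * deriv (deriv v) s = Real.exp (v s - u s) :=
  E3_truncation_cosh_solution_general k c A B a b hpos u v hu hv
end

section
/- Let α, β ∈ ℝ and define the polynomials Q3(t) = −(4/3)t³ + α t² − (α²/4) t + β and Q4(t) = (4/3)t⁴ − (4/3)α t³ + (α²/2) t² + ((16β − α³)/8) t + (α⁴ − 32 α β)/64. Then on any open interval I ⊆ ℝ where Q3 > 0 and Q4 > 0, the pair f(t) = ln Q3(t), g(t) = ln Q4(t) satisfies the V1 truncated system (1/4)·f''(t) = −e^{g(t) − 2 f(t)} and (1/4)·g''(t) = −e^{−2 g(t) + 2 f(t)} for all t ∈ I. (This is the two-parameter family 'Set B' of explicit solutions.) -/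
/-!
Writing `f = log P`, `g = log Q`, one has `f'' = (P P'' - P'²) / P²` and
`e^{g - 2f} = Q / P²`, `e^{-2g + 2f} = P² / Q²`. So the V1 system for `(log P, log Q)` is
equivalent to the bilinear identities `P P'' - P'² = -4 Q` and `Q Q'' - Q'² = -4 P²`,
which for the Set B cubic `Q3` and quartic `Q4` are polynomial identities in `t, α, β`.
-/

open Real Filter Topology

theorem hasDerivAt_quartic (c₄ c₃ c₂ c₁ c₀ t : ℝ) :
    HasDerivAt (fun x : ℝ => c₄ * x ^ 4 + c₃ * x ^ 3 + c₂ * x ^ 2 + c₁ * x + c₀)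
      (4 * c₄ * t ^ 3 + 3 * c₃ * t ^ 2 + 2 * c₂ * t + c₁) t := by
  have hpow (n : ℕ) : HasDerivAt (fun x : ℝ => x ^ n) (n * t ^ (n - 1)) t := hasDerivAt_pow n t
  refine ((((hpow 4).const_mul c₄).fun_add ((hpow 3).const_mul c₃)).fun_add ((hpow 2).const_mul c₂)
    |>.fun_add ((hasDerivAt_id' t).const_mul c₁)).add_const c₀ |>.congr_deriv ?_
  norm_num
  ring

theorem deriv_deriv_log {Q Q' : ℝ → ℝ} {t Q'' : ℝ} (hQt : Q t ≠ 0)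
    (hQ : ∀ᶠ s in 𝓝 t, HasDerivAt Q (Q' s) s) (hQ' : HasDerivAt Q' Q'' t) :
    deriv (deriv fun s => log (Q s)) t = (Q t * Q'' - Q' t ^ 2) / Q t ^ 2 := by
  have hne : ∀ᶠ s in 𝓝 t, Q s ≠ 0 := hQ.self_of_nhds.continuousAt.eventually_ne hQt
  have hlog : deriv (fun s => log (Q s)) =ᶠ[𝓝 t] fun s => Q' s / Q s := by
    filter_upwards [hQ, hne] with s hQs hs
    exact (hQs.log hs).deriv
  rw [hlog.deriv_eq, (hQ'.fun_div hQ.self_of_nhds hQt).deriv]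
  ring

theorem exp_two_mul_log {x : ℝ} (hx : 0 < x) : exp (2 * log x) = x ^ 2 := by
  rw [← exp_log (pow_pos hx 2), log_pow]
  norm_num

theorem log_pair_solves_V1_of_bilinear {P Q P' Q' : ℝ → ℝ} {t P'' Q'' : ℝ}
    (hP : ∀ᶠ s in 𝓝 t, HasDerivAt P (P' s) s) (hQ : ∀ᶠ s in 𝓝 t, HasDerivAt Q (Q' s) s)
    (hP' : HasDerivAt P' P'' t) (hQ' : HasDerivAt Q' Q'' t)
    (hPt : 0 < P t) (hQt : 0 < Q t)
    (hP_bilinear : P t * P'' - P' t ^ 2 = -4 * Q t)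
    (hQ_bilinear : Q t * Q'' - Q' t ^ 2 = -4 * P t ^ 2) :
    (1/4) * deriv (deriv fun s => log (P s)) t = -exp (log (Q t) - 2 * log (P t)) ∧
    (1/4) * deriv (deriv fun s => log (Q s)) t = -exp (-(2 * log (Q t)) + 2 * log (P t)) := by
  rw [deriv_deriv_log hPt.ne' hP hP', deriv_deriv_log hQt.ne' hQ hQ', hP_bilinear, hQ_bilinear,
    exp_sub, exp_add, exp_neg, exp_log hQt, exp_two_mul_log hPt, exp_two_mul_log hQt]
  constructor <;> ring

section SetB

variable (α β : ℝ)

theorem hasDerivAt_setB_Q3 (t : ℝ) :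
    HasDerivAt (fun t => -(4/3) * t^3 + α * t^2 - (α^2/4) * t + β)
      (-4 * t^2 + 2 * α * t - α^2/4) t := by
  convert hasDerivAt_quartic 0 (-(4/3)) α (-(α^2/4)) β t using 1 <;> [funext; skip] <;> ring

theorem hasDerivAt_setB_Q3_deriv (t : ℝ) :
    HasDerivAt (fun t => -4 * t^2 + 2 * α * t - α^2/4) (-8 * t + 2 * α) t := by
  convert hasDerivAt_quartic 0 0 (-4) (2 * α) (-(α^2/4)) t using 1 <;> [funext; skip] <;> ring

theorem hasDerivAt_setB_Q4 (t : ℝ) :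
    HasDerivAt (fun t => (4/3) * t^4 - (4/3) * α * t^3 + (α^2/2) * t^2
      + ((16 * β - α^3)/8) * t + (α^4 - 32 * α * β)/64)
      ((16/3) * t^3 - 4 * α * t^2 + α^2 * t + (16 * β - α^3)/8) t := by
  convert hasDerivAt_quartic (4/3) (-(4/3) * α) (α^2/2) ((16 * β - α^3)/8)
    ((α^4 - 32 * α * β)/64) t using 1 <;> [funext; skip] <;> ring

theorem hasDerivAt_setB_Q4_deriv (t : ℝ) :
    HasDerivAt (fun t => (16/3) * t^3 - 4 * α * t^2 + α^2 * t + (16 * β - α^3)/8)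
      (16 * t^2 - 8 * α * t + α^2) t := by
  convert hasDerivAt_quartic 0 (16/3) (-(4 * α)) (α^2) ((16 * β - α^3)/8) t using 1
    <;> [funext; skip] <;> ring

end SetB

/-- The two-parameter family "Set B" of explicit solutions of the V1 truncated system:
with `Q3(t) = −(4/3)t³ + α t² − (α²/4)t + β` and
`Q4(t) = (4/3)t⁴ − (4/3)α t³ + (α²/2)t² + ((16β − α³)/8)t + (α⁴ − 32αβ)/64`,
the pair `f = ln Q3`, `g = ln Q4` solves `(1/4) f'' = −e^{g−2f}`, `(1/4) g'' = −e^{−2g+2f}`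
on any open interval where `Q3 > 0` and `Q4 > 0`. -/
theorem V1_truncation_setB_solution (α β : ℝ)
    (Q3 Q4 : ℝ → ℝ)
    (hQ3 : Q3 = fun t => -(4/3) * t^3 + α * t^2 - (α^2/4) * t + β)
    (hQ4 : Q4 = fun t => (4/3) * t^4 - (4/3) * α * t^3 + (α^2/2) * t^2
      + ((16 * β - α^3)/8) * t + (α^4 - 32 * α * β)/64)
    (a b : ℝ) (hpos : ∀ t ∈ Set.Ioo a b, 0 < Q3 t ∧ 0 < Q4 t)
    (f g : ℝ → ℝ) (hf : f = fun t => Real.log (Q3 t)) (hg : g = fun t => Real.log (Q4 t)) :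
    ∀ t ∈ Set.Ioo a b,
      (1/4) * deriv (deriv f) t = -Real.exp (g t - 2 * f t) ∧
      (1/4) * deriv (deriv g) t = -Real.exp (-(2 * g t) + 2 * f t) := by
  subst hQ3 hQ4 hf hg
  intro t ht
  obtain ⟨hQ3_pos, hQ4_pos⟩ := hpos t ht
  exact log_pair_solves_V1_of_bilinear
    (.of_forall (hasDerivAt_setB_Q3 α β)) (.of_forall (hasDerivAt_setB_Q4 α β))
    (hasDerivAt_setB_Q3_deriv α t) (hasDerivAt_setB_Q4_deriv α β t) hQ3_pos hQ4_pos
    (by ring) (by ring)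
end

section
/- Let P(t) = a₃t³ + a₂t² + a₁t + a₀ and Q(t) = b₄t⁴ + b₃t³ + b₂t² + b₁t + b₀ be real polynomials. Suppose there is a nonempty open interval I ⊆ ℝ on which P > 0 and Q > 0 and on which the pair f = ln P, g = ln Q satisfies the V1 truncated system (1/4)·f'' = −e^{g − 2f} and (1/4)·g'' = −e^{−2g + 2f}. Then the coefficients satisfy exactly one of the following two sets of relations. Set A: a₃ = 4/3, b₄ = 4/3, a₁ = a₂²/4, b₃ = (4/3)a₂, b₂ = a₂²/2, b₁ = (a₂³ − 16 a₀)/8, b₀ = (a₂⁴ − 32 a₀ a₂)/64. Set B: a₃ = −4/3, b₄ = 4/3, a₁ = −a₂²/4, b₃ = −(4/3)a₂, b₂ = a₂²/2, b₁ = (16 a₀ − a₂³)/8, b₀ = (a₂⁴ − 32 a₀ a₂)/64. Conversely, any coefficients satisfying Set A or Set B yield a solution on every open interval where P > 0 and Q > 0. -/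
/-!
With `P, Q > 0`, the system for `(log P, log Q)` is equivalent to the identities
`P P'' - P'² + 4 Q = 0` and `Q Q'' - Q'² + 4 P² = 0`. For polynomials these hold on an
interval iff they hold identically, i.e. coefficientwise. The top coefficients give
`4 b₄ = 3 a₃²` and `b₄² = a₃²`, so either `a₃ = 0`, which forces `P = 0`, or `a₃ = ± 4/3`.
The other coefficients of the first identity then express `b₃, b₂, b₁, b₀` through the `aᵢ`,
and the `t⁴` coefficient of the second one gives `a₁ = ± a₂²/4`.
-/

/-- The coefficient relations "Set A". -/
def V1SetA (a₀ a₁ a₂ a₃ b₀ b₁ b₂ b₃ b₄ : ℝ) : Prop :=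
  a₃ = 4/3 ∧ b₄ = 4/3 ∧ a₁ = a₂^2/4 ∧ b₃ = (4/3) * a₂ ∧ b₂ = a₂^2/2 ∧
    b₁ = (a₂^3 - 16 * a₀)/8 ∧ b₀ = (a₂^4 - 32 * a₀ * a₂)/64

/-- The coefficient relations "Set B". -/
def V1SetB (a₀ a₁ a₂ a₃ b₀ b₁ b₂ b₃ b₄ : ℝ) : Prop :=
  a₃ = -(4/3) ∧ b₄ = 4/3 ∧ a₁ = -(a₂^2/4) ∧ b₃ = -((4/3) * a₂) ∧ b₂ = a₂^2/2 ∧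
    b₁ = (16 * a₀ - a₂^3)/8 ∧ b₀ = (a₂^4 - 32 * a₀ * a₂)/64

open Real Set Polynomial Topology

def IsV1SolutionAt (P Q : ℝ → ℝ) (t : ℝ) : Prop :=
  (1/4) * deriv (deriv (fun x => log (P x))) t = -exp (log (Q t) - 2 * log (P t)) ∧
    (1/4) * deriv (deriv (fun x => log (Q x))) t = -exp (-(2 * log (Q t)) + 2 * log (P t))

theorem deriv_deriv_log_of_pos {F : ℝ → ℝ} {s : Set ℝ} {t : ℝ} (hs : IsOpen s)
    (hF : ∀ x ∈ s, DifferentiableAt ℝ F x) (hF' : DifferentiableAt ℝ (deriv F) t)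
    (hpos : ∀ x ∈ s, 0 < F x) (ht : t ∈ s) :
    deriv (deriv fun x => log (F x)) t = (F t * deriv (deriv F) t - deriv F t ^ 2) / F t ^ 2 := by
  have hlog : deriv (fun x => log (F x)) =ᶠ[𝓝 t] fun x => deriv F x / F x := by
    filter_upwards [hs.mem_nhds ht] with x hx
    exact ((hF x hx).hasDerivAt.log (hpos x hx).ne').deriv
  rw [hlog.deriv_eq]
  refine (hF'.hasDerivAt.div (hF t ht).hasDerivAt (hpos t ht).ne').deriv.trans ?_
  ring

theorem exp_log_sub_two_mul_log {p q : ℝ} (hp : 0 < p) (hq : 0 < q) :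
    exp (log q - 2 * log p) = q / p ^ 2 := by
  rw [exp_sub, exp_log hq, two_mul, exp_add, exp_log hp, sq]

theorem exp_neg_two_mul_log_add_two_mul_log {p q : ℝ} (hp : 0 < p) (hq : 0 < q) :
    exp (-(2 * log q) + 2 * log p) = p ^ 2 / q ^ 2 := by
  rw [neg_add_eq_sub, exp_sub, two_mul, two_mul, exp_add, exp_add, exp_log hp, exp_log hq,
    sq, sq]

theorem isV1SolutionAt_iff {P Q : ℝ → ℝ} {s : Set ℝ} {t : ℝ} (hs : IsOpen s)
    (hP : ∀ x ∈ s, DifferentiableAt ℝ P x) (hP' : DifferentiableAt ℝ (deriv P) t)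
    (hQ : ∀ x ∈ s, DifferentiableAt ℝ Q x) (hQ' : DifferentiableAt ℝ (deriv Q) t)
    (hpos : ∀ x ∈ s, 0 < P x ∧ 0 < Q x) (ht : t ∈ s) :
    IsV1SolutionAt P Q t ↔
      P t * deriv (deriv P) t - deriv P t ^ 2 + 4 * Q t = 0 ∧
        Q t * deriv (deriv Q) t - deriv Q t ^ 2 + 4 * P t ^ 2 = 0 := by
  obtain ⟨hPt, hQt⟩ := hpos t ht
  rw [IsV1SolutionAt, deriv_deriv_log_of_pos hs hP hP' (fun x hx => (hpos x hx).1) ht,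
    deriv_deriv_log_of_pos hs hQ hQ' (fun x hx => (hpos x hx).2) ht,
    exp_log_sub_two_mul_log hPt hQt, exp_neg_two_mul_log_add_two_mul_log hPt hQt]
  refine and_congr ?_ ?_ <;> constructor <;> intro h <;> field_simp at h ⊢ <;> linarith

namespace Polynomial

theorem eq_zero_of_forall_mem_Ioo_eval_eq_zero {R : Type*} [CommRing R] [IsDomain R]
    [LinearOrder R] [DenselyOrdered R] {p : R[X]} {a b : R} (hab : a < b)
    (h : ∀ t ∈ Ioo a b, p.eval t = 0) : p = 0 :=
  p.eq_zero_of_infinite_isRoot ((Ioo_infinite hab).mono h)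

theorem deriv_fun_eval {𝕜 : Type*} [NontriviallyNormedField 𝕜] (p : 𝕜[X]) :
    deriv (fun x => p.eval x) = fun x => p.derivative.eval x := by
  ext
  exact p.deriv

end Polynomial

noncomputable section

def v1Residual₁ (p q : ℝ[X]) : ℝ[X] := p * derivative (derivative p) - derivative p ^ 2 + 4 * q

def v1Residual₂ (p q : ℝ[X]) : ℝ[X] := q * derivative (derivative q) - derivative q ^ 2 + 4 * p ^ 2

def cubicPoly (a₀ a₁ a₂ a₃ : ℝ) : ℝ[X] := C a₃ * X ^ 3 + C a₂ * X ^ 2 + C a₁ * X + C a₀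

def quarticPoly (b₀ b₁ b₂ b₃ b₄ : ℝ) : ℝ[X] :=
  C b₄ * X ^ 4 + C b₃ * X ^ 3 + C b₂ * X ^ 2 + C b₁ * X + C b₀

end

section PolynomialSolutions

variable {p q : ℝ[X]}

theorem isV1SolutionAt_eval_iff {s : Set ℝ} {t : ℝ} (hs : IsOpen s)
    (hpos : ∀ x ∈ s, 0 < p.eval x ∧ 0 < q.eval x) (ht : t ∈ s) :
    IsV1SolutionAt (fun x => p.eval x) (fun x => q.eval x) t ↔
      (v1Residual₁ p q).eval t = 0 ∧ (v1Residual₂ p q).eval t = 0 := by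
  rw [isV1SolutionAt_iff hs (fun x _ => p.differentiableAt)
    (by rw [p.deriv_fun_eval]; exact p.derivative.differentiableAt)
    (fun x _ => q.differentiableAt) (by rw [q.deriv_fun_eval]; exact q.derivative.differentiableAt)
    hpos ht]
  simp only [deriv_fun_eval, v1Residual₁, v1Residual₂, eval_add, eval_sub, eval_mul, eval_pow,
    eval_ofNat]

theorem v1Residual_eq_zero_of_isV1SolutionAt {a b : ℝ} (hab : a < b)
    (hpos : ∀ t ∈ Ioo a b, 0 < p.eval t ∧ 0 < q.eval t)
    (hsol : ∀ t ∈ Ioo a b, IsV1SolutionAt (fun x => p.eval x) (fun x => q.eval x) t) :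
    v1Residual₁ p q = 0 ∧ v1Residual₂ p q = 0 :=
  have h t ht := (isV1SolutionAt_eval_iff isOpen_Ioo hpos ht).mp (hsol t ht)
  ⟨eq_zero_of_forall_mem_Ioo_eval_eq_zero hab fun t ht => (h t ht).1,
    eq_zero_of_forall_mem_Ioo_eval_eq_zero hab fun t ht => (h t ht).2⟩

end PolynomialSolutions

section Coefficients

variable {a₀ a₁ a₂ a₃ b₀ b₁ b₂ b₃ b₄ : ℝ}

theorem eval_cubicPoly (t : ℝ) :
    (cubicPoly a₀ a₁ a₂ a₃).eval t = a₃ * t ^ 3 + a₂ * t ^ 2 + a₁ * t + a₀ := by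
  simp [cubicPoly]

theorem eval_quarticPoly (t : ℝ) :
    (quarticPoly b₀ b₁ b₂ b₃ b₄).eval t = b₄ * t ^ 4 + b₃ * t ^ 3 + b₂ * t ^ 2 + b₁ * t + b₀ := by
  simp [quarticPoly]

theorem v1Residual₁_cubicPoly_quarticPoly :
    v1Residual₁ (cubicPoly a₀ a₁ a₂ a₃) (quarticPoly b₀ b₁ b₂ b₃ b₄) =
      C (4 * b₄ - 3 * a₃ ^ 2) * X ^ 4 + C (4 * b₃ - 4 * a₂ * a₃) * X ^ 3 +
        C (4 * b₂ - 2 * a₂ ^ 2) * X ^ 2 + C (4 * b₁ + 6 * a₀ * a₃ - 2 * a₁ * a₂) * X +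
        C (4 * b₀ + 2 * a₀ * a₂ - a₁ ^ 2) := by
  refine Polynomial.funext fun t => ?_
  simp [v1Residual₁, cubicPoly, quarticPoly]
  ring

theorem v1Residual₂_cubicPoly_quarticPoly :
    v1Residual₂ (cubicPoly a₀ a₁ a₂ a₃) (quarticPoly b₀ b₁ b₂ b₃ b₄) =
      C (4 * a₃ ^ 2 - 4 * b₄ ^ 2) * X ^ 6 + C (8 * a₂ * a₃ - 6 * b₃ * b₄) * X ^ 5 +
        C (4 * a₂ ^ 2 + 8 * a₁ * a₃ - 2 * b₂ * b₄ - 3 * b₃ ^ 2) * X ^ 4 +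
        C (8 * a₁ * a₂ + 8 * a₀ * a₃ + 4 * b₁ * b₄ - 4 * b₂ * b₃) * X ^ 3 +
        C (4 * a₁ ^ 2 + 8 * a₀ * a₂ + 12 * b₀ * b₄ - 2 * b₂ ^ 2) * X ^ 2 +
        C (8 * a₀ * a₁ + 6 * b₀ * b₃ - 2 * b₁ * b₂) * X +
        C (4 * a₀ ^ 2 + 2 * b₀ * b₂ - b₁ ^ 2) := by
  refine Polynomial.funext fun t => ?_
  simp [v1Residual₂, cubicPoly, quarticPoly]
  ring

theorem coeffs_of_v1Residual₁_eq_zero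
    (h : v1Residual₁ (cubicPoly a₀ a₁ a₂ a₃) (quarticPoly b₀ b₁ b₂ b₃ b₄) = 0) :
    4 * b₀ + 2 * a₀ * a₂ - a₁ ^ 2 = 0 ∧ 4 * b₁ + 6 * a₀ * a₃ - 2 * a₁ * a₂ = 0 ∧
      4 * b₂ - 2 * a₂ ^ 2 = 0 ∧ 4 * b₃ - 4 * a₂ * a₃ = 0 ∧ 4 * b₄ - 3 * a₃ ^ 2 = 0 := by
  rw [v1Residual₁_cubicPoly_quarticPoly] at h
  have hc (k : ℕ) := congrArg (coeff · k) h
  refine ⟨?_, ?_, ?_, ?_, ?_⟩ <;>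
    [have := hc 0; have := hc 1; have := hc 2; have := hc 3; have := hc 4] <;>
    simp only [coeff_add, coeff_C_mul_X_pow, coeff_C_mul_X, coeff_C] at this <;> simpa using this

theorem even_coeffs_of_v1Residual₂_eq_zero
    (h : v1Residual₂ (cubicPoly a₀ a₁ a₂ a₃) (quarticPoly b₀ b₁ b₂ b₃ b₄) = 0) :
    4 * a₀ ^ 2 + 2 * b₀ * b₂ - b₁ ^ 2 = 0 ∧
      4 * a₁ ^ 2 + 8 * a₀ * a₂ + 12 * b₀ * b₄ - 2 * b₂ ^ 2 = 0 ∧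
      4 * a₂ ^ 2 + 8 * a₁ * a₃ - 2 * b₂ * b₄ - 3 * b₃ ^ 2 = 0 ∧ 4 * a₃ ^ 2 - 4 * b₄ ^ 2 = 0 := by
  rw [v1Residual₂_cubicPoly_quarticPoly] at h
  have hc (k : ℕ) := congrArg (coeff · k) h
  refine ⟨?_, ?_, ?_, ?_⟩ <;> [have := hc 0; have := hc 2; have := hc 4; have := hc 6] <;>
    simp only [coeff_add, coeff_C_mul_X_pow, coeff_C_mul_X, coeff_C] at this <;> simpa using this

theorem cubicPoly_eq_zero_of_v1Residual_eq_zero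
    (h₁ : v1Residual₁ (cubicPoly a₀ a₁ a₂ a₃) (quarticPoly b₀ b₁ b₂ b₃ b₄) = 0)
    (h₂ : v1Residual₂ (cubicPoly a₀ a₁ a₂ a₃) (quarticPoly b₀ b₁ b₂ b₃ b₄) = 0)
    (ha₃ : a₃ = 0) : cubicPoly a₀ a₁ a₂ a₃ = 0 := by
  obtain ⟨c₀, c₁, c₂, c₃, c₄⟩ := coeffs_of_v1Residual₁_eq_zero h₁
  obtain ⟨d₀, d₂, d₄, -⟩ := even_coeffs_of_v1Residual₂_eq_zero h₂
  subst ha₃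
  obtain rfl : b₄ = 0 := by linarith
  obtain rfl : b₃ = 0 := by linarith
  obtain rfl : a₂ = 0 := by nlinarith
  obtain rfl : b₂ = 0 := by linarith
  obtain rfl : b₁ = 0 := by linarith
  obtain rfl : a₁ = 0 := by nlinarith
  obtain rfl : b₀ = 0 := by linarith
  obtain rfl : a₀ = 0 := by nlinarith
  simp [cubicPoly]

theorem v1SetA_or_v1SetB_of_v1Residual_eq_zero
    (h₁ : v1Residual₁ (cubicPoly a₀ a₁ a₂ a₃) (quarticPoly b₀ b₁ b₂ b₃ b₄) = 0)
    (h₂ : v1Residual₂ (cubicPoly a₀ a₁ a₂ a₃) (quarticPoly b₀ b₁ b₂ b₃ b₄) = 0)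
    (ha₃ : a₃ ≠ 0) : V1SetA a₀ a₁ a₂ a₃ b₀ b₁ b₂ b₃ b₄ ∨ V1SetB a₀ a₁ a₂ a₃ b₀ b₁ b₂ b₃ b₄ := by
  obtain ⟨c₀, c₁, c₂, c₃, c₄⟩ := coeffs_of_v1Residual₁_eq_zero h₁
  obtain ⟨-, -, d₄, d₆⟩ := even_coeffs_of_v1Residual₂_eq_zero h₂
  have hroots : (3 * a₃ - 4) * (3 * a₃ + 4) = 0 :=
    mul_left_cancel₀ (pow_ne_zero 2 ha₃)
      (by linear_combination (-(4 * b₄ + 3 * a₃ ^ 2)) * c₄ - 4 * d₆)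
  obtain rfl : b₄ = 3 / 4 * a₃ ^ 2 := by linarith
  obtain rfl : b₃ = a₂ * a₃ := by linarith
  obtain rfl : b₂ = a₂ ^ 2 / 2 := by linarith
  rcases mul_eq_zero.1 hroots with h | h
  · obtain rfl : a₃ = 4 / 3 := by linarith
    obtain rfl : a₁ = a₂ ^ 2 / 4 := by linear_combination (3 / 32) * d₄
    exact .inl ⟨rfl, by norm_num, rfl, by ring, rfl, by linarith, by linarith⟩
  · obtain rfl : a₃ = -(4 / 3) := by linarith
    obtain rfl : a₁ = -(a₂ ^ 2 / 4) := by linear_combination (-3 / 32) * d₄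
    exact .inr ⟨rfl, by norm_num, rfl, by ring, rfl, by linarith, by linarith⟩

theorem not_v1SetA_and_v1SetB :
    ¬(V1SetA a₀ a₁ a₂ a₃ b₀ b₁ b₂ b₃ b₄ ∧ V1SetB a₀ a₁ a₂ a₃ b₀ b₁ b₂ b₃ b₄) := by
  rintro ⟨⟨hA, -⟩, ⟨hB, -⟩⟩
  linarith

theorem v1Residual_eq_zero_of_v1SetA_or_v1SetB
    (h : V1SetA a₀ a₁ a₂ a₃ b₀ b₁ b₂ b₃ b₄ ∨ V1SetB a₀ a₁ a₂ a₃ b₀ b₁ b₂ b₃ b₄) :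
    v1Residual₁ (cubicPoly a₀ a₁ a₂ a₃) (quarticPoly b₀ b₁ b₂ b₃ b₄) = 0 ∧
      v1Residual₂ (cubicPoly a₀ a₁ a₂ a₃) (quarticPoly b₀ b₁ b₂ b₃ b₄) = 0 := by
  rcases h with ⟨rfl, rfl, rfl, rfl, rfl, rfl, rfl⟩ | ⟨rfl, rfl, rfl, rfl, rfl, rfl, rfl⟩ <;>
    constructor <;> refine Polynomial.funext fun t => ?_ <;>
    simp [v1Residual₁, v1Residual₂, cubicPoly, quarticPoly] <;> ring

end Coefficients

/-- A cubic `P` and a quartic `Q` give a solution `(ln P, ln Q)` of the V1 truncated system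
`(1/4) f'' = −e^{g−2f}`, `(1/4) g'' = −e^{−2g+2f}` on some nonempty open interval where
`P, Q > 0` if and only if their coefficients satisfy exactly one of the two sets of
relations Set A and Set B; conversely, coefficients from Set A or Set B yield a solution
on every open interval where `P > 0` and `Q > 0`. -/
theorem V1_truncation_polynomial_classification
    (a₀ a₁ a₂ a₃ b₀ b₁ b₂ b₃ b₄ : ℝ) (P Q : ℝ → ℝ)
    (hP : P = fun t => a₃ * t^3 + a₂ * t^2 + a₁ * t + a₀)
    (hQ : Q = fun t => b₄ * t^4 + b₃ * t^3 + b₂ * t^2 + b₁ * t + b₀) :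
    ((∃ a b : ℝ, a < b ∧
        (∀ t ∈ Set.Ioo a b, 0 < P t ∧ 0 < Q t) ∧
        (∀ t ∈ Set.Ioo a b,
          (1/4) * deriv (deriv (fun x => Real.log (P x))) t
              = -Real.exp (Real.log (Q t) - 2 * Real.log (P t)) ∧
          (1/4) * deriv (deriv (fun x => Real.log (Q x))) t
              = -Real.exp (-(2 * Real.log (Q t)) + 2 * Real.log (P t)))) →
      Xor' (V1SetA a₀ a₁ a₂ a₃ b₀ b₁ b₂ b₃ b₄) (V1SetB a₀ a₁ a₂ a₃ b₀ b₁ b₂ b₃ b₄)) ∧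
    ((V1SetA a₀ a₁ a₂ a₃ b₀ b₁ b₂ b₃ b₄ ∨ V1SetB a₀ a₁ a₂ a₃ b₀ b₁ b₂ b₃ b₄) →
      ∀ a b : ℝ, (∀ t ∈ Set.Ioo a b, 0 < P t ∧ 0 < Q t) →
        ∀ t ∈ Set.Ioo a b,
          (1/4) * deriv (deriv (fun x => Real.log (P x))) t
              = -Real.exp (Real.log (Q t) - 2 * Real.log (P t)) ∧
          (1/4) * deriv (deriv (fun x => Real.log (Q x))) t
              = -Real.exp (-(2 * Real.log (Q t)) + 2 * Real.log (P t))) := by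
  obtain rfl : P = fun t => (cubicPoly a₀ a₁ a₂ a₃).eval t := by simp only [hP, eval_cubicPoly]
  obtain rfl : Q = fun t => (quarticPoly b₀ b₁ b₂ b₃ b₄).eval t := by
    simp only [hQ, eval_quarticPoly]
  refine ⟨fun ⟨a, b, hab, hpos, hsol⟩ => ?_, fun hAB a b hpos t ht => ?_⟩
  · obtain ⟨h₁, h₂⟩ := v1Residual_eq_zero_of_isV1SolutionAt hab hpos hsol
    have ha₃ : a₃ ≠ 0 := fun ha₃ => by
      have hmid := (hpos ((a + b) / 2) ⟨by linarith, by linarith⟩).1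
      simp [cubicPoly_eq_zero_of_v1Residual_eq_zero h₁ h₂ ha₃] at hmid
    exact (xor_iff_or_and_not_and _ _).2
      ⟨v1SetA_or_v1SetB_of_v1Residual_eq_zero h₁ h₂ ha₃, not_v1SetA_and_v1SetB⟩
  · obtain ⟨h₁, h₂⟩ := v1Residual_eq_zero_of_v1SetA_or_v1SetB hAB
    exact (isV1SolutionAt_eval_iff isOpen_Ioo hpos ht).2 (by simp [h₁, h₂])
end
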